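/- arXiv:1401.2256 — 4 statements merged into one kernel-verified Lean document; each statement's English description precedes it below -/
import Mathlib

section
/- Let $T_1$ be a nonnegative real random variable (possibly taking value $+\infty$) and define $\varphi(\lambda) := \mathbb{E}(e^{\lambda T_1}\,\mathbf{1}(T_1 < \infty))$ for $\lambda < 0$. If $\mathbb{P}(T_1 < \infty) > 0$ and $\alpha \geq 0$ is the minimum of the support of the law of $T_1$ restricted to $\{T_1 < \infty\}$, then $\lim_{\lambda \to -\infty} \frac{\varphi'(\lambda)}{\varphi(\lambda)} = \alpha$, i.e. the logarithmic derivative of $\varphi$ tends to $\alpha$ as $\lambda \to -\infty$. -/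
/-!
Write `D(λ) = ∫ e^{λX}` and `N(λ) = ∫ X e^{λX}` on `{T < ∞}`, with `X = T`. Since `X ≥ α` almost
surely, `N/D - α = ∫ (X - α) e^{λX} / D ≥ 0`. Fix `δ > 0`. Splitting at `y = δ` and using
`y e^{λy/2} ≤ 2/|λ|` beyond it gives `y e^{λy} ≤ δ e^{λy} + (2/|λ|) e^{λδ/2}`, hence
`∫ (X - α) e^{λX} ≤ δ D + (2/|λ|) e^{λ(α + δ/2)}`, while `D ≥ P(X ≤ α + δ/2) e^{λ(α + δ/2)}` and this
probability is positive by the choice of `α`. So `0 ≤ N/D - α ≤ δ + O(1/|λ|)`.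
-/

open MeasureTheory Filter Topology
open Real

lemma mul_exp_mul_le_inv_neg {y l : ℝ} (hl : l < 0) : y * exp (l * y) ≤ (-l)⁻¹ := by
  have hz : -l * y ≤ exp (-l * y) := by linarith [add_one_le_exp (-l * y)]
  rw [← one_div, le_div_iff₀' (neg_pos.2 hl)]
  calc -l * (y * exp (l * y)) = (-l * y) * exp (l * y) := by ring
    _ ≤ exp (-l * y) * exp (l * y) := by gcongr
    _ = 1 := by rw [← exp_add]; simp

lemma mul_exp_mul_le_add {y l δ : ℝ} (hl : l < 0) (hδ : 0 ≤ δ) :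
    y * exp (l * y) ≤ δ * exp (l * y) + 2 * (-l)⁻¹ * exp (l * δ / 2) := by
  have hl' : 0 < -l := neg_pos.2 hl
  rcases le_or_gt y δ with hyδ | hδy
  · have : 0 ≤ 2 * (-l)⁻¹ * exp (l * δ / 2) := by positivity
    nlinarith [mul_le_mul_of_nonneg_right hyδ (exp_pos (l * y)).le]
  · have hhalf : y * exp (l / 2 * y) ≤ 2 * (-l)⁻¹ := by
      simpa [neg_div, inv_div, div_eq_mul_inv, mul_comm] using
        mul_exp_mul_le_inv_neg (by linarith : l / 2 < 0)
    have hdecay : exp (l / 2 * y) ≤ exp (l * δ / 2) := exp_le_exp.2 (by nlinarith)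
    calc y * exp (l * y) = (y * exp (l / 2 * y)) * exp (l / 2 * y) := by
          rw [mul_assoc, ← exp_add]; ring_nf
      _ ≤ 2 * (-l)⁻¹ * exp (l * δ / 2) := by gcongr
      _ ≤ δ * exp (l * y) + 2 * (-l)⁻¹ * exp (l * δ / 2) :=
          le_add_of_nonneg_left (by positivity)

lemma sub_mul_exp_mul_le_add {x α l δ : ℝ} (hl : l < 0) (hδ : 0 ≤ δ) :
    (x - α) * exp (l * x) ≤ δ * exp (l * x) + 2 * (-l)⁻¹ * exp (l * (α + δ / 2)) := by
  have key := mul_le_mul_of_nonneg_right (mul_exp_mul_le_add (y := x - α) hl hδ)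
    (exp_pos (l * α)).le
  have hsplit : ∀ u, exp (l * u) * exp (l * α) = exp (l * (α + u)) := fun u => by
    rw [← exp_add]; ring_nf
  calc (x - α) * exp (l * x) = (x - α) * exp (l * (x - α)) * exp (l * α) := by
        rw [mul_assoc, hsplit]; ring_nf
    _ ≤ (δ * exp (l * (x - α)) + 2 * (-l)⁻¹ * exp (l * δ / 2)) * exp (l * α) := key
    _ = δ * exp (l * x) + 2 * (-l)⁻¹ * exp (l * (α + δ / 2)) := by
        rw [add_mul, mul_assoc, mul_assoc, hsplit, mul_div_assoc, hsplit]; ring_nf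

section

variable {Ω : Type*} [MeasurableSpace Ω] {μ : Measure Ω} {X : Ω → ℝ} {α l : ℝ}

lemma ae_le_of_forall_lt_measure_le_eq_zero (h : ∀ t < α, μ {ω | X ω ≤ t} = 0) :
    ∀ᵐ ω ∂μ, α ≤ X ω := by
  rw [ae_iff]
  refine measure_mono_null (fun ω hω => ?_)
    (measure_iUnion_null fun n : ℕ => h (α - 1 / (n + 1)) ?_)
  · obtain ⟨n, hn⟩ := exists_nat_one_div_lt (sub_pos.2 (not_le.1 hω))
    exact Set.mem_iUnion.2 ⟨n, show X ω ≤ _ by linarith⟩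
  · have : (0 : ℝ) < 1 / (n + 1) := by positivity
    linarith

lemma measure_le_eq_zero_of_lt_sInf (hX : ∀ ω, 0 ≤ X ω) {t : ℝ}
    (ht : t < sInf {s : ℝ | 0 ≤ s ∧ μ {ω | X ω ≤ s} ≠ 0}) : μ {ω | X ω ≤ t} = 0 := by
  rcases lt_or_ge t 0 with ht0 | ht0
  · convert measure_empty (μ := μ)
    exact Set.eq_empty_of_forall_notMem fun ω hω => (hX ω).not_gt (lt_of_le_of_lt hω ht0)
  · by_contra hne
    exact ht.not_ge (csInf_le ⟨0, fun s hs => hs.1⟩ ⟨ht0, hne⟩)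

lemma measure_le_ne_zero_of_sInf_lt (hμ : μ ≠ 0) {t : ℝ}
    (ht : sInf {s : ℝ | 0 ≤ s ∧ μ {ω | X ω ≤ s} ≠ 0} < t) : μ {ω | X ω ≤ t} ≠ 0 := by
  have hne : {s : ℝ | 0 ≤ s ∧ μ {ω | X ω ≤ s} ≠ 0}.Nonempty := by
    by_contra hempty
    refine hμ (Measure.measure_univ_eq_zero.1 (measure_mono_null
      (fun ω _ => Set.mem_iUnion.2 (exists_nat_ge (X ω))) (measure_iUnion_null fun n : ℕ => ?_)))
    by_contra h
    exact hempty ⟨n, n.cast_nonneg, h⟩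
  obtain ⟨s, ⟨-, hs⟩, hst⟩ := exists_lt_of_csInf_lt hne ht
  exact fun h0 => hs (measure_mono_null (fun ω hω => le_trans hω hst.le) h0)

variable [IsFiniteMeasure μ]

lemma integrable_exp_mul (hX : AEMeasurable X μ) (hα : ∀ᵐ ω ∂μ, α ≤ X ω) (hl : l ≤ 0) :
    Integrable (fun ω => exp (l * X ω)) μ :=
  (integrable_const (exp (l * α))).mono' (by fun_prop) (hα.mono fun ω h => by
    rw [norm_of_nonneg (exp_pos _).le]
    exact exp_le_exp.2 (mul_le_mul_of_nonpos_left h hl))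

lemma integrable_sub_mul_exp_mul (hX : AEMeasurable X μ) (hα : ∀ᵐ ω ∂μ, α ≤ X ω) (hl : l < 0) :
    Integrable (fun ω => (X ω - α) * exp (l * X ω)) μ :=
  (integrable_const (2 * (-l)⁻¹ * exp (l * α))).mono' (by fun_prop) (hα.mono fun ω h => by
    rw [norm_of_nonneg (mul_nonneg (sub_nonneg.2 h) (exp_pos _).le)]
    simpa using sub_mul_exp_mul_le_add (x := X ω) (α := α) hl le_rfl)

lemma integral_mul_exp_mul_eq_add (hX : AEMeasurable X μ) (hα : ∀ᵐ ω ∂μ, α ≤ X ω) (hl : l < 0) :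
    ∫ ω, X ω * exp (l * X ω) ∂μ =
      α * ∫ ω, exp (l * X ω) ∂μ + ∫ ω, (X ω - α) * exp (l * X ω) ∂μ := by
  rw [← integral_const_mul, ← integral_add ((integrable_exp_mul hX hα hl.le).const_mul α)
    (integrable_sub_mul_exp_mul hX hα hl)]
  congr 1 with ω
  ring

lemma integral_sub_mul_exp_mul_le (hX : AEMeasurable X μ) (hα : ∀ᵐ ω ∂μ, α ≤ X ω) (hl : l < 0)
    {δ : ℝ} (hδ : 0 ≤ δ) :
    ∫ ω, (X ω - α) * exp (l * X ω) ∂μ ≤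
      δ * ∫ ω, exp (l * X ω) ∂μ + 2 * (-l)⁻¹ * exp (l * (α + δ / 2)) * μ.real Set.univ := by
  have hexp := integrable_exp_mul hX hα hl.le
  calc ∫ ω, (X ω - α) * exp (l * X ω) ∂μ
      ≤ ∫ ω, (δ * exp (l * X ω) + 2 * (-l)⁻¹ * exp (l * (α + δ / 2))) ∂μ :=
        integral_mono (integrable_sub_mul_exp_mul hX hα hl)
          ((hexp.const_mul δ).add (integrable_const _)) fun ω => sub_mul_exp_mul_le_add hl hδ
    _ = _ := by
        rw [integral_add (hexp.const_mul δ) (integrable_const _), integral_const_mul,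
          integral_const, smul_eq_mul]
        ring

lemma measureReal_mul_exp_le_integral_exp_mul (hX : Measurable X) (hα : ∀ᵐ ω ∂μ, α ≤ X ω)
    (hl : l ≤ 0) (t : ℝ) :
    μ.real {ω | X ω ≤ t} * exp (l * t) ≤ ∫ ω, exp (l * X ω) ∂μ := by
  have hexp := integrable_exp_mul hX.aemeasurable hα hl
  calc μ.real {ω | X ω ≤ t} * exp (l * t) ≤ ∫ ω in {ω | X ω ≤ t}, exp (l * X ω) ∂μ := by
        rw [mul_comm]
        exact setIntegral_ge_of_const_le_real (measurableSet_le hX measurable_const)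
          (measure_ne_top _ _) (fun ω hω => exp_le_exp.2 (mul_le_mul_of_nonpos_left hω hl))
          hexp.integrableOn
    _ ≤ ∫ ω, exp (l * X ω) ∂μ :=
        setIntegral_le_integral hexp (Eventually.of_forall fun _ => (exp_pos _).le)

lemma integral_mul_exp_div_integral_exp_mem_Icc (hX : Measurable X) (hα : ∀ᵐ ω ∂μ, α ≤ X ω)
    (hl : l < 0) {δ : ℝ} (hδ : 0 ≤ δ) (hc : 0 < μ.real {ω | X ω ≤ α + δ / 2}) :
    (∫ ω, X ω * exp (l * X ω) ∂μ) / ∫ ω, exp (l * X ω) ∂μ ∈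
      Set.Icc α (α + δ + 2 * μ.real Set.univ / (μ.real {ω | X ω ≤ α + δ / 2} * -l)) := by
  set D := ∫ ω, exp (l * X ω) ∂μ
  set c := μ.real {ω | X ω ≤ α + δ / 2}
  set E := exp (l * (α + δ / 2))
  have hl' : 0 < -l := neg_pos.2 hl
  have hD : c * E ≤ D := measureReal_mul_exp_le_integral_exp_mul hX hα hl.le _
  have hDpos : 0 < D := (by positivity : 0 < c * E).trans_le hD
  have hle := integral_sub_mul_exp_mul_le hX.aemeasurable hα hl hδ
  have hnonneg : 0 ≤ ∫ ω, (X ω - α) * exp (l * X ω) ∂μ :=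
    integral_nonneg_of_ae (hα.mono fun ω h => mul_nonneg (sub_nonneg.2 h) (exp_pos _).le)
  have htail : 2 * (-l)⁻¹ * E * μ.real Set.univ ≤ 2 * μ.real Set.univ / (c * -l) * D :=
    calc 2 * (-l)⁻¹ * E * μ.real Set.univ = 2 * μ.real Set.univ / (c * -l) * (c * E) := by
          field_simp
      _ ≤ 2 * μ.real Set.univ / (c * -l) * D := by gcongr
  rw [integral_mul_exp_mul_eq_add hX.aemeasurable hα hl, Set.mem_Icc, le_div_iff₀ hDpos,
    div_le_iff₀ hDpos]
  constructor <;> nlinarith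

theorem tendsto_integral_mul_exp_div_integral_exp (hX : Measurable X) (hα : ∀ᵐ ω ∂μ, α ≤ X ω)
    (hpos : ∀ t, α < t → μ {ω | X ω ≤ t} ≠ 0) :
    Tendsto (fun l => (∫ ω, X ω * exp (l * X ω) ∂μ) / ∫ ω, exp (l * X ω) ∂μ) atBot (𝓝 α) := by
  have hc : ∀ δ, 0 < δ → 0 < μ.real {ω | X ω ≤ α + δ / 2} := fun δ hδ =>
    ENNReal.toReal_pos (hpos _ (by linarith)) (measure_ne_top _ _)
  refine tendsto_order.2 ⟨fun a ha => ?_, fun b hb => ?_⟩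
  · filter_upwards [eventually_lt_atBot 0] with l hl
    exact ha.trans_le (integral_mul_exp_div_integral_exp_mem_Icc hX hα hl zero_le_one
      (hc 1 one_pos)).1
  · have hδ : 0 < (b - α) / 2 := by linarith
    have hsmall : Tendsto (fun l : ℝ => 2 * μ.real Set.univ /
        (μ.real {ω | X ω ≤ α + (b - α) / 2 / 2} * -l)) atBot (𝓝 0) :=
      tendsto_const_nhds.div_atTop (tendsto_neg_atBot_atTop.const_mul_atTop (hc _ hδ))
    filter_upwards [eventually_lt_atBot 0, hsmall.eventually (gt_mem_nhds hδ)] with l hl hl'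
    refine (integral_mul_exp_div_integral_exp_mem_Icc hX hα hl hδ.le (hc _ hδ)).2.trans_lt ?_
    linarith

end

theorem logDeriv_mgf_tendsto_support_min_general
    {Ω : Type*} [MeasurableSpace Ω] (ℙ : Measure Ω) [IsProbabilityMeasure ℙ]
    (T : Ω → ENNReal) (hT : Measurable T)
    (hfin : ℙ {ω | T ω ≠ ⊤} ≠ 0)
    (α : ℝ)
    (hα : α = sInf {t : ℝ | 0 ≤ t ∧ ℙ {ω | T ω ≠ ⊤ ∧ (T ω).toReal ≤ t} ≠ 0})
    (φ φ' : ℝ → ℝ)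
    (hφ : ∀ l : ℝ, l < 0 →
      φ l = ∫ ω in {ω | T ω ≠ ⊤}, Real.exp (l * (T ω).toReal) ∂ℙ)
    (hφ' : ∀ l : ℝ, l < 0 →
      φ' l = ∫ ω in {ω | T ω ≠ ⊤}, (T ω).toReal * Real.exp (l * (T ω).toReal) ∂ℙ) :
    Tendsto (fun l : ℝ => φ' l / φ l) atBot (𝓝 α) := by
  have hS : MeasurableSet {ω | T ω ≠ ⊤} := (hT (measurableSet_singleton ⊤)).compl
  have hrestrict : ∀ t : ℝ, ℙ.restrict {ω | T ω ≠ ⊤} {ω | (T ω).toReal ≤ t} =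
      ℙ {ω | T ω ≠ ⊤ ∧ (T ω).toReal ≤ t} := fun t => by
    rw [Measure.restrict_apply' hS, Set.inter_comm]
    rfl
  simp_rw [← hrestrict] at hα
  have hμ : ℙ.restrict {ω | T ω ≠ ⊤} ≠ 0 := by rwa [Ne, Measure.restrict_eq_zero]
  have hlower : ∀ᵐ ω ∂ℙ.restrict {ω | T ω ≠ ⊤}, α ≤ (T ω).toReal :=
    ae_le_of_forall_lt_measure_le_eq_zero fun t ht =>
      measure_le_eq_zero_of_lt_sInf (fun ω => (T ω).toReal_nonneg) (hα ▸ ht)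
  refine (tendsto_integral_mul_exp_div_integral_exp hT.ennreal_toReal hlower fun t ht =>
    measure_le_ne_zero_of_sInf_lt hμ (hα ▸ ht)).congr' ?_
  filter_upwards [eventually_lt_atBot 0] with l hl
  rw [hφ l hl, hφ' l hl]

/-- The logarithmic derivative of the (restricted) moment generating function of a
nonnegative (possibly infinite) random variable tends, as `λ → -∞`, to the minimum `α`
of the support of its law restricted to the event where it is finite. -/
theorem logDeriv_mgf_tendsto_support_min
    {Ω : Type*} [MeasurableSpace Ω] (ℙ : Measure Ω) [IsProbabilityMeasure ℙ]
    (T : Ω → ENNReal) (hT : Measurable T)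
    (hfin : ℙ {ω | T ω ≠ ⊤} ≠ 0)
    (α : ℝ) (hα0 : 0 ≤ α)
    (hα : α = sInf {t : ℝ | 0 ≤ t ∧ ℙ {ω | T ω ≠ ⊤ ∧ (T ω).toReal ≤ t} ≠ 0})
    (φ φ' : ℝ → ℝ)
    (hφ : ∀ l : ℝ, l < 0 →
      φ l = ∫ ω in {ω | T ω ≠ ⊤}, Real.exp (l * (T ω).toReal) ∂ℙ)
    (hφ' : ∀ l : ℝ, l < 0 →
      φ' l = ∫ ω in {ω | T ω ≠ ⊤}, (T ω).toReal * Real.exp (l * (T ω).toReal) ∂ℙ) :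
    Tendsto (fun l : ℝ => φ' l / φ l) atBot (𝓝 α) :=
  logDeriv_mgf_tendsto_support_min_general ℙ T hT hfin α hα φ φ' hφ hφ'
end

section
/- Let $T$ be a random variable with values in $(0,+\infty]$, $\mathbb{P}(T < \infty) > 0$, with support minimum $\alpha \geq 0$ on $\{T < \infty\}$, and suppose $\mathbb{P}(T = \alpha) = 0$. Define $\varphi(\lambda) := \mathbb{E}(e^{\lambda T}\mathbf{1}(T < \infty))$ and $J(u) := \sup_{\lambda}\{\lambda u - \log\varphi(\lambda)\}$. Then $J(\alpha) = +\infty$. -/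
/-! On `{T < ∞}` the variable `T` lies a.s. at or above the bottom `α` of its support, and it
avoids `α` itself since `α` is not an atom; so `T > α` a.s. there. Writing
`φ(λ) = e^{λα} g(λ)` with `g(λ) = E(e^{λ(T - α)} 1(T < ∞))`, dominated convergence gives
`g(λ) → 0` as `λ → -∞`, and `λα - log φ(λ) = -log g(λ) → +∞`. -/

open MeasureTheory Filter Topology

section

variable {Ω : Type*} [MeasurableSpace Ω] {μ : Measure Ω} {f : Ω → ℝ}

lemma bddBelow_setOf_measure_le_ne_zero (hf : ∀ ω, 0 ≤ f ω) :
    BddBelow {t : ℝ | μ {ω | f ω ≤ t} ≠ 0} :=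
  ⟨0, fun _ ht ↦
    let ⟨ω, hω⟩ := nonempty_of_measure_ne_zero ht
    (hf ω).trans hω⟩

lemma ae_sInf_setOf_measure_le_ne_zero_le (hbdd : BddBelow {t : ℝ | μ {ω | f ω ≤ t} ≠ 0}) :
    ∀ᵐ ω ∂μ, sInf {t : ℝ | μ {ω | f ω ≤ t} ≠ 0} ≤ f ω := by
  set α := sInf {t : ℝ | μ {ω | f ω ≤ t} ≠ 0}
  have hnull (q : {q : ℚ // (q : ℝ) < α}) : μ {ω | f ω ≤ q} = 0 := by
    by_contra h
    exact (csInf_le hbdd h).not_gt q.2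
  refine ae_iff.2 (measure_mono_null (fun ω hω ↦ ?_) (measure_iUnion_null hnull))
  obtain ⟨q, hfq, hqα⟩ := exists_rat_btwn (not_le.1 hω)
  exact Set.mem_iUnion.2 ⟨⟨q, hqα⟩, hfq.le⟩

lemma ae_restrict_lt_toReal_of_eq_sInf_of_no_atom {T : Ω → ENNReal} (hT : Measurable T) {α : ℝ}
    (hα : α = sInf {t : ℝ | μ {ω | T ω ≠ ⊤ ∧ (T ω).toReal ≤ t} ≠ 0})
    (hnoatom : μ {ω | T ω = ENNReal.ofReal α} = 0) :
    ∀ᵐ ω ∂μ.restrict {ω | T ω ≠ ⊤}, α < (T ω).toReal := by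
  have hS : MeasurableSet {ω | T ω ≠ ⊤} := (hT (measurableSet_singleton ⊤)).compl
  have hsupp : {t : ℝ | μ.restrict {ω | T ω ≠ ⊤} {ω | (T ω).toReal ≤ t} ≠ 0} =
      {t : ℝ | μ {ω | T ω ≠ ⊤ ∧ (T ω).toReal ≤ t} ≠ 0} := by
    ext t
    rw [Set.mem_ofPred_eq, Set.mem_ofPred_eq, Measure.restrict_apply' hS, Set.inter_comm]
    rfl
  have hT_ge := ae_sInf_setOf_measure_le_ne_zero_le (μ := μ.restrict {ω | T ω ≠ ⊤})
    (bddBelow_setOf_measure_le_ne_zero fun ω ↦ (T ω).toReal_nonneg)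
  rw [hsupp, ← hα] at hT_ge
  filter_upwards [hT_ge, ae_restrict_mem hS,
    ae_restrict_of_ae (measure_eq_zero_iff_ae_notMem.1 hnoatom)] with ω hge hfin hne
  refine hge.lt_of_ne fun h ↦ hne ?_
  rw [h, ENNReal.ofReal_toReal hfin]

lemma tendsto_lintegral_exp_mul_atBot_of_ae_pos [IsFiniteMeasure μ] (hf : Measurable f)
    (hpos : ∀ᵐ ω ∂μ, 0 < f ω) :
    Tendsto (fun l : ℝ ↦ ∫⁻ ω, ENNReal.ofReal (Real.exp (l * f ω)) ∂μ) atBot (𝓝 0) := by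
  have hbound : ∀ᶠ l in atBot, ∀ᵐ ω ∂μ, ENNReal.ofReal (Real.exp (l * f ω)) ≤ 1 := by
    filter_upwards [eventually_le_atBot 0] with l hl
    filter_upwards [hpos] with ω hω
    exact ENNReal.ofReal_le_one.2 (Real.exp_le_one_iff.2 (mul_nonpos_of_nonpos_of_nonneg hl hω.le))
  have hlim : ∀ᵐ ω ∂μ, Tendsto (fun l : ℝ ↦ ENNReal.ofReal (Real.exp (l * f ω))) atBot (𝓝 0) := by
    filter_upwards [hpos] with ω hω
    simpa [Function.comp_def, mul_comm] using (ENNReal.continuous_ofReal.tendsto 0).comp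
      (Real.tendsto_exp_atBot.comp (tendsto_id.atBot_mul_const hω))
  simpa using tendsto_lintegral_filter_of_dominated_convergence (fun _ ↦ 1)
    (Eventually.of_forall fun _ ↦ by fun_prop) hbound (by simp) hlim

end

lemma EReal.coe_sub_log_ofReal_exp_mul (x : ℝ) (y : ENNReal) :
    (x : EReal) - ENNReal.log (ENNReal.ofReal (Real.exp x) * y) = ENNReal.log y⁻¹ := by
  rw [ENNReal.log_mul_add, ENNReal.log_ofReal_of_pos (Real.exp_pos x), Real.log_exp, add_comm,
    EReal.sub_add_cancel_right, ENNReal.log_inv]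

lemma iSup_eq_top_of_tendsto {α ι : Type*} [CompleteLinearOrder α] [TopologicalSpace α]
    [OrderClosedTopology α] {l : Filter ι} [l.NeBot] {f : ι → α} (hf : Tendsto f l (𝓝 ⊤)) :
    ⨆ i, f i = ⊤ :=
  top_unique (le_of_tendsto' hf (le_iSup f))

theorem rate_function_infinite_at_support_min_of_no_atom_general
    {Ω : Type*} [MeasurableSpace Ω] (μ : Measure Ω) [IsProbabilityMeasure μ]
    (T : Ω → ENNReal) (hT : Measurable T)
    (φ : ℝ → ENNReal)
    (hφ : ∀ l : ℝ, φ l = ∫⁻ ω in {ω | T ω ≠ ⊤},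
      ENNReal.ofReal (Real.exp (l * (T ω).toReal)) ∂μ)
    (J : ℝ → EReal)
    (hJ : ∀ u : ℝ, J u = ⨆ l : ℝ, (((l * u : ℝ) : EReal) - ENNReal.log (φ l)))
    (α : ℝ)
    (hα : α = sInf {t : ℝ | μ {ω | T ω ≠ ⊤ ∧ (T ω).toReal ≤ t} ≠ 0})
    (hnoatom : μ {ω | T ω = ENNReal.ofReal α} = 0) :
    J α = ⊤ := by
  have hT_gt := ae_restrict_lt_toReal_of_eq_sInf_of_no_atom hT hα hnoatom
  set g : ℝ → ENNReal := fun l ↦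
    ∫⁻ ω in {ω | T ω ≠ ⊤}, ENNReal.ofReal (Real.exp (l * ((T ω).toReal - α))) ∂μ
  have hφg (l : ℝ) : φ l = ENNReal.ofReal (Real.exp (l * α)) * g l := by
    rw [hφ, ← lintegral_const_mul' _ _ ENNReal.ofReal_ne_top]
    congr 1 with ω
    rw [← ENNReal.ofReal_mul (Real.exp_pos _).le, ← Real.exp_add]
    ring_nf
  have hg : Tendsto g atBot (𝓝 0) :=
    tendsto_lintegral_exp_mul_atBot_of_ae_pos (by fun_prop) (hT_gt.mono fun _ ↦ sub_pos.2)
  rw [hJ]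
  simp_rw [hφg, EReal.coe_sub_log_ofReal_exp_mul]
  have hinv : Tendsto (fun l ↦ (g l)⁻¹) atBot (𝓝 ⊤) := by
    simpa using tendsto_inv_iff.2 hg
  exact iSup_eq_top_of_tendsto <| by
    simpa [Function.comp_def] using (ENNReal.continuous_log.tendsto ⊤).comp hinv

/-- If the minimum `α` of the support of `T` (restricted to `{T < ∞}`) is not an atom,
i.e. `ℙ(T = α) = 0`, then the Cramér rate function `J(u) = sup_λ {λu - log φ(λ)}` of the
moment generating function `φ(λ) = E(e^{λT} 1(T < ∞))` satisfies `J(α) = +∞`. -/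
theorem rate_function_infinite_at_support_min_of_no_atom
    {Ω : Type*} [MeasurableSpace Ω] (μ : Measure Ω) [IsProbabilityMeasure μ]
    (T : Ω → ENNReal) (hT : Measurable T)
    (hTpos : ∀ ω, 0 < T ω)
    (hfin : μ {ω | T ω ≠ ⊤} ≠ 0)
    (φ : ℝ → ENNReal)
    (hφ : ∀ l : ℝ, φ l = ∫⁻ ω in {ω | T ω ≠ ⊤},
      ENNReal.ofReal (Real.exp (l * (T ω).toReal)) ∂μ)
    (J : ℝ → EReal)
    (hJ : ∀ u : ℝ, J u = ⨆ l : ℝ, (((l * u : ℝ) : EReal) - ENNReal.log (φ l)))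
    (α : ℝ) (hα0 : 0 ≤ α)
    (hα : α = sInf {t : ℝ | μ {ω | T ω ≠ ⊤ ∧ (T ω).toReal ≤ t} ≠ 0})
    (hnoatom : μ {ω | T ω = ENNReal.ofReal α} = 0) :
    J α = ⊤ :=
  rate_function_infinite_at_support_min_of_no_atom_general μ T hT φ hφ J hJ α hα hnoatom
end

section
/- Let $V \subseteq \mathbb{C}^n$ be open such that $U := V \cap \mathbb{R}^n$ is connected, and let $f : V \to \mathbb{C}$ be holomorphic. Then either $f \equiv 0$ on $U$, or the zero set $\{z \in U : f(z) = 0\}$ has $n$-dimensional Lebesgue measure zero. -/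
/-!
On a real line, `f` is the restriction of a holomorphic function of one complex variable (its
restriction to the complex line), hence real analytic; so on a segment inside `U` it either
vanishes identically or has countably many zeros. If `f` vanishes near one point of `U`, propagating along segments inside balls and
using connectedness gives `f = 0` on `U`. Otherwise, near any `a ∈ U` pick `b` close to `a` with
`f b ≠ 0`: every line parallel to `b - a` through a point near `a` meets a nonzero of `f` inside a
ball around `a`, so its zeros there are countable, and disintegrating Lebesgue measure along the
direction `b - a` shows that the zero set is null near `a`.
-/

open MeasureTheory Filter Topology Set Metric

variable {E F : Type*} [NormedAddCommGroup E] [NormedSpace ℝ E]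
  [NormedAddCommGroup F] [NormedSpace ℝ F]

theorem Convex.setOf_add_smul_mem {C : Set E} (hC : Convex ℝ C) (p v : E) :
    Convex ℝ {t : ℝ | p + t • v ∈ C} := by
  simpa [preimage, AffineMap.lineMap_apply_module', add_comm] using
    hC.affine_preimage (AffineMap.lineMap p (p + v))

theorem AnalyticOnNhd.ae_restrict_ne_zero {φ : ℝ → F} {I : Set ℝ} (hφ : AnalyticOnNhd ℝ φ I)
    (hI : IsPreconnected I) (hI' : MeasurableSet I) {t₁ : ℝ} (ht₁ : t₁ ∈ I) (h₁ : φ t₁ ≠ 0) :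
    ∀ᵐ t ∂volume.restrict I, φ t ≠ 0 :=
  ae_restrict_le_codiscreteWithin hI' <|
    (hφ.eqOn_zero_or_eventually_ne_zero_of_preconnected hI).resolve_left fun h => h₁ (h ht₁)

def LineAnalyticOn (g : E → F) (U : Set E) : Prop :=
  ∀ p v : E, AnalyticOnNhd ℝ (fun t : ℝ => g (p + t • v)) {t | p + t • v ∈ U}

namespace LineAnalyticOn

variable {g : E → F} {U C : Set E}

theorem eqOn_zero_of_convex (hg : LineAnalyticOn g U) (hC : Convex ℝ C) (hCU : C ⊆ U) {y : E}
    (hy : y ∈ C) (hy0 : g =ᶠ[𝓝 y] 0) : EqOn g 0 C := by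
  intro z hz
  have hline : Tendsto (fun t : ℝ => y + t • (z - y)) (𝓝 0) (𝓝 y) := by
    have : Continuous (fun t : ℝ => y + t • (z - y)) := by fun_prop
    simpa using this.tendsto 0
  have h0 : (0 : ℝ) ∈ {t : ℝ | y + t • (z - y) ∈ C} := by simpa using hy
  have h1 : (1 : ℝ) ∈ {t : ℝ | y + t • (z - y) ∈ C} := by simpa using hz
  have hφ := (hg y (z - y)).mono fun t ht => hCU ht
  simpa using hφ.eqOn_zero_of_preconnected_of_eventuallyEq_zero
    (hC.setOf_add_smul_mem y (z - y)).isPreconnected h0 (hline.eventually hy0) h1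

theorem eqOn_zero_of_preconnected (hg : LineAnalyticOn g U) (hU : IsOpen U)
    (hU' : IsPreconnected U) {x₀ : E} (hx₀ : x₀ ∈ U) (h₀ : g =ᶠ[𝓝 x₀] 0) : EqOn g 0 U := by
  suffices U ⊆ {x | g =ᶠ[𝓝 x] 0} from fun x hx => (this hx).self_of_nhds
  refine hU'.subset_of_closure_inter_subset isOpen_setOfPred_eventually_nhds ⟨x₀, hx₀, h₀⟩ ?_
  rintro x ⟨hx, hxU⟩
  obtain ⟨r, hr, hball⟩ := Metric.isOpen_iff.mp hU x hxU
  obtain ⟨y, hy, hy0⟩ := mem_closure_iff.mp hx _ isOpen_ball (mem_ball_self hr)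
  exact eventually_of_mem (ball_mem_nhds x hr)
    (hg.eqOn_zero_of_convex (convex_ball x r) hball hy hy0)

variable [FiniteDimensional ℝ E] [MeasurableSpace E] [BorelSpace E] (μ : Measure E)
  [μ.IsAddHaarMeasure]

theorem measure_zeros_eq_zero_of_ne_zero_add (hg : LineAnalyticOn g U) (hC : IsOpen C)
    (hC' : Convex ℝ C) (hCU : C ⊆ U) {N : Set E} (hN : IsOpen N) (hgN : ContinuousOn g N)
    {v : E} (hNv : ∀ x ∈ N, x ∈ C ∧ x + v ∈ C ∧ g (x + v) ≠ 0) :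
    μ {x ∈ N | g x = 0} = 0 := by
  set s := {x | x ∈ N → g x ≠ 0}
  have hs : MeasurableSet s := by
    have : s = Nᶜ ∪ N ∩ g ⁻¹' {0}ᶜ := by
      ext x
      simp only [s, mem_ofPred_eq, mem_union, mem_compl_iff, mem_inter_iff, mem_preimage,
        mem_singleton_iff]
      tauto
    rw [this]
    exact hN.measurableSet.compl.union
      (hgN.isOpen_inter_preimage hN isOpen_compl_singleton).measurableSet
  suffices ∀ p : E, ∀ᵐ t : ℝ, p + t • v ∈ s by
    simpa [ae_iff, s] using
      ae_mem_of_ae_add_linearMap_mem ((LinearMap.id : ℝ →ₗ[ℝ] ℝ).smulRight v) volume μ hs this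
  intro p
  by_cases hp : ∃ t₀ : ℝ, p + t₀ • v ∈ N
  · obtain ⟨t₀, ht₀⟩ := hp
    have hI : IsOpen {t : ℝ | p + t • v ∈ C} := hC.preimage (by fun_prop)
    have h₁ : p + (t₀ + 1) • v ∈ C ∧ g (p + (t₀ + 1) • v) ≠ 0 := by
      rw [add_smul, one_smul, ← add_assoc]
      exact (hNv _ ht₀).2
    have := ((hg p v).mono fun t ht => hCU ht).ae_restrict_ne_zero
      (hC'.setOf_add_smul_mem p v).isPreconnected hI.measurableSet h₁.1 h₁.2
    filter_upwards [(ae_restrict_iff' hI.measurableSet).mp this] with t ht htN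
    exact ht (hNv _ htN).1
  · exact Eventually.of_forall fun t ht => absurd ht (not_exists.mp hp t)

theorem exists_mem_nhds_measure_zeros_eq_zero (hg : LineAnalyticOn g U) (hU : IsOpen U)
    (hgU : ContinuousOn g U) {a : E} (ha : a ∈ U) (ha0 : ¬ g =ᶠ[𝓝 a] 0) :
    ∃ N ∈ 𝓝 a, μ {x ∈ N | g x = 0} = 0 := by
  obtain ⟨r, hr, hball⟩ := Metric.isOpen_iff.mp hU a ha
  obtain ⟨b, hb0, hb⟩ := ((not_eventually.mp ha0).and_eventually (ball_mem_nhds a hr)).exists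
  have hgb : ∀ᶠ x in 𝓝 b, g x ≠ 0 ∧ x ∈ ball a r :=
    ((hgU.continuousAt (hU.mem_nhds (hball hb))).eventually_ne hb0).and
      (isOpen_ball.mem_nhds hb)
  obtain ⟨ε, hε, hεb⟩ := Metric.eventually_nhds_iff_ball.mp hgb
  refine ⟨ball a (min ε r), ball_mem_nhds a (lt_min hε hr), ?_⟩
  refine hg.measure_zeros_eq_zero_of_ne_zero_add μ isOpen_ball (convex_ball a r) hball isOpen_ball
    (hgU.mono ((ball_subset_ball (min_le_right ε r)).trans hball)) (v := b - a) fun x hx => ?_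
  have hxv : x + (b - a) ∈ ball b ε := by
    rw [mem_ball, dist_eq_norm, show x + (b - a) - b = x - a by abel, ← dist_eq_norm]
    exact (mem_ball.mp hx).trans_le (min_le_left ε r)
  exact ⟨ball_subset_ball (min_le_right ε r) hx, (hεb _ hxv).2, (hεb _ hxv).1⟩

theorem eqOn_zero_or_measure_zeros_eq_zero (hg : LineAnalyticOn g U) (hU : IsOpen U)
    (hU' : IsPreconnected U) (hgU : ContinuousOn g U) :
    EqOn g 0 U ∨ μ {x ∈ U | g x = 0} = 0 := by
  by_cases h : ∃ x₀ ∈ U, g =ᶠ[𝓝 x₀] 0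
  · obtain ⟨x₀, hx₀, h₀⟩ := h
    exact Or.inl (hg.eqOn_zero_of_preconnected hU hU' hx₀ h₀)
  · refine Or.inr (measure_null_of_locally_null _ ?_)
    intro x hx
    obtain ⟨N, hN, hN0⟩ :=
      hg.exists_mem_nhds_measure_zeros_eq_zero μ hU hgU hx.1 fun h0 => h ⟨x, hx.1, h0⟩
    refine ⟨N ∩ {x ∈ U | g x = 0}, inter_mem (mem_nhdsWithin_of_mem_nhds hN) self_mem_nhdsWithin,
      measure_mono_null ?_ hN0⟩
    exact fun y hy => ⟨hy.1, hy.2.2⟩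

end LineAnalyticOn

theorem DifferentiableOn.lineAnalyticOn_comp {E' G : Type*} [NormedAddCommGroup E']
    [NormedSpace ℂ E'] [NormedAddCommGroup G] [NormedSpace ℂ G] [CompleteSpace G]
    {f : E' → G} {V : Set E'} (hf : DifferentiableOn ℂ f V) (hV : IsOpen V) (L : E →L[ℝ] E') :
    LineAnalyticOn (f ∘ L) (L ⁻¹' V) := by
  intro p v
  set Φ : ℂ → E' := fun ζ => L p + ζ • L v
  have hΦ : Differentiable ℂ Φ := by fun_prop
  have hfΦ : AnalyticOnNhd ℂ (f ∘ Φ) (Φ ⁻¹' V) :=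
    (hf.comp hΦ.differentiableOn fun _ h => h).analyticOnNhd (hV.preimage hΦ.continuous)
  have hΦL : ∀ t : ℝ, Φ t = L (p + t • v) := fun t => by
    simp [Φ, Complex.coe_smul]
  intro t ht
  have := (hfΦ t (by simpa [hΦL] using ht)).restrictScalars.comp (Complex.ofRealCLM.analyticAt t)
  simpa [Function.comp_def, hΦL] using this

/-- Let `V ⊆ ℂⁿ` be open with `U := V ∩ ℝⁿ` connected, and let `f : V → ℂ` be
holomorphic. Then either `f` vanishes identically on `U`, or the real zero set
`{x ∈ U : f(x) = 0}` has `n`-dimensional Lebesgue measure zero. -/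
theorem real_zero_set_of_holomorphic
    (n : ℕ) (V : Set (Fin n → ℂ)) (hV : IsOpen V)
    (f : (Fin n → ℂ) → ℂ) (hf : DifferentiableOn ℂ f V)
    (U : Set (Fin n → ℝ))
    (hU : U = {x : Fin n → ℝ | (fun i => (x i : ℂ)) ∈ V})
    (hUconn : IsConnected U) :
    (∀ x ∈ U, f (fun i => (x i : ℂ)) = 0) ∨
      volume {x : Fin n → ℝ | x ∈ U ∧ f (fun i => (x i : ℂ)) = 0} = 0 := by
  set L : (Fin n → ℝ) →L[ℝ] (Fin n → ℂ) :=
    ContinuousLinearMap.pi fun i => Complex.ofRealCLM.comp (ContinuousLinearMap.proj i)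
  obtain rfl : U = L ⁻¹' V := hU
  have hfL : ContinuousOn (f ∘ L) (L ⁻¹' V) :=
    hf.continuousOn.comp L.continuous.continuousOn (mapsTo_preimage _ _)
  exact ((hf.lineAnalyticOn_comp hV L).eqOn_zero_or_measure_zeros_eq_zero volume
    (hV.preimage L.continuous) hUconn.isPreconnected hfL).imp (fun h x hx => h hx) id
end

section
/- Let $b : \mathbb{R}_+ \to (0,1]$ be a nonincreasing-in-the-sense $b_s \geq b_t$ for $s \leq t$ function, and suppose there exist constants $J \in \mathbb{R}$, an integer $m \geq 2$, and for every $\epsilon > 0$ a time $t_\epsilon$ such that for all $t \geq t_\epsilon$: $b_t \leq (2 + m^2 c)e^{-tJ + t\epsilon} + e^{t\epsilon}\sum_{j=2}^{m} K_j\, e^{-t\frac{j}{m}J}\, b_{t(1 - j/m)}$ for suitable nonnegative combinatorial constants $K_j$ bounded by $m^2 c$ ($c \geq 1$ fixed). Then $x := \limsup_{t\to\infty} \frac{1}{t}\log b_t$ satisfies $x \leq -J$. -/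
/-!
If `b_s ≤ e^{s y}` for large `s` (and trivially at `s = 0`), the recursive bound, in which every
term `e^{-t r J} b_{t(1-r)}` has `r = j/m ∈ [2/m, 1]`, yields `b_t ≲ e^{t(ε + max(-J, y - 2(J+y)/m))}`,
the exponent being affine in `r`. So `x = limsup (1/t) log b_t` satisfies
`x ≤ max(-J, y - 2(J+y)/m)` for every `y > x`, which forces `x ≤ -J`.
-/

open Filter Topology Real Finset

noncomputable def expGrowthRate (b : ℝ → ℝ) : EReal :=
  limsup (fun t : ℝ => (((1 / t) * log (b t) : ℝ) : EReal)) atTop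

theorem neg_mul_add_one_sub_mul_le_max {J y r θ : ℝ} (hθ : θ ≤ r) (hr : r ≤ 1) :
    -r * J + (1 - r) * y ≤ max (-J) (y - θ * (J + y)) := by
  rcases le_total 0 (J + y) with h | h
  · exact le_max_of_le_right (by nlinarith)
  · exact le_max_of_le_left (by nlinarith)

theorem eventually_forall_le_mul_one_sub_div {P : ℝ → Prop} (hP : ∀ᶠ s in atTop, P s)
    (h0 : P 0) {m : ℕ} (hm : 0 < m) : ∀ᶠ t in atTop, ∀ j ≤ m, P (t * (1 - j / m)) := by
  obtain ⟨T, hT⟩ := eventually_atTop.1 hP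
  have hm' : (0 : ℝ) < m := by exact_mod_cast hm
  filter_upwards [eventually_ge_atTop (m * T), eventually_ge_atTop 0] with t htT ht j hj
  rcases hj.lt_or_eq with hj | rfl
  · have hfrac : 1 / (m : ℝ) ≤ 1 - j / m := by
      rw [le_sub_iff_add_le, ← add_div, div_le_one hm']
      exact_mod_cast (by omega : 1 + j ≤ m)
    refine hT _ (le_trans ?_ (mul_le_mul_of_nonneg_left hfrac ht))
    rwa [mul_one_div, le_div_iff₀ hm', mul_comm]
  · simpa [hm'.ne'] using h0

theorem le_neg_of_forall_lt_le_max {x : EReal} {J θ : ℝ} (hθ : 0 < θ) (hx : x ≠ ⊤)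
    (h : ∀ y : ℝ, x < y → ∀ ε > 0, x ≤ ((ε + max (-J) (y - θ * (J + y)) : ℝ) : EReal)) :
    x ≤ (-J : ℝ) := by
  induction x with
  | bot => exact bot_le
  | top => exact absurd rfl hx
  | coe x =>
    have hmax (y : ℝ) (hy : x < y) : x ≤ max (-J) (y - θ * (J + y)) :=
      le_of_forall_pos_le_add fun ε hε => by
        have := EReal.coe_le_coe_iff.1 (h y (EReal.coe_lt_coe_iff.2 hy) ε hε)
        linarith
    refine EReal.coe_le_coe_iff.2 (not_lt.1 fun hJx => ?_)
    -- at `y = x + θ (J + x)` the second branch of the max is `x - θ² (J + x) < x`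
    have hgap : 0 < θ * θ * (J + x) := mul_pos (mul_pos hθ hθ) (by linarith)
    exact (hmax (x + θ * (J + x)) (by nlinarith)).not_gt (max_lt hJx (by nlinarith))

section Bootstrap

variable {b : ℝ → ℝ}

theorem eventually_le_exp_of_expGrowthRate_lt {y : ℝ} (hb : ∀ᶠ t in atTop, 0 < b t)
    (h : expGrowthRate b < y) : ∀ᶠ t in atTop, b t ≤ exp (t * y) := by
  filter_upwards [eventually_lt_of_limsup_lt h, hb, eventually_gt_atTop 0] with t hlt hbt ht
  have hlog : log (b t) < t * y := by
    rw [EReal.coe_lt_coe_iff, one_div, inv_mul_lt_iff₀ ht] at hlt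
    exact hlt
  rw [← exp_log hbt]
  exact exp_le_exp.2 hlog.le

theorem expGrowthRate_le_of_eventually_le_mul_exp {C a : ℝ} (hb : ∀ᶠ t in atTop, 0 < b t)
    (h : ∀ᶠ t in atTop, b t ≤ C * exp (t * a)) : expGrowthRate b ≤ a := by
  have hlim : Tendsto (fun t : ℝ => ((log C / t + a : ℝ) : EReal)) atTop (𝓝 a) := by
    refine EReal.tendsto_coe.2 ?_
    simpa using (tendsto_const_nhds (x := log C)).div_atTop tendsto_id |>.add_const a
  refine (limsup_le_limsup ?_).trans hlim.limsup_eq.le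
  filter_upwards [hb, h, eventually_gt_atTop 0] with t hbt hle ht
  have hC : 0 < C := pos_of_mul_pos_left (hbt.trans_le hle) (exp_pos _).le
  have hlog : log (b t) ≤ log C + t * a := by
    calc log (b t) ≤ log (C * exp (t * a)) := log_le_log hbt hle
      _ = log C + t * a := by rw [log_mul hC.ne' (exp_pos _).ne', log_exp]
  refine EReal.coe_le_coe_iff.2 ?_
  calc 1 / t * log (b t) ≤ 1 / t * (log C + t * a) := by gcongr
    _ = log C / t + a := by field_simp

theorem bootstrap_summand_le {K : ℝ} (hK : 0 ≤ K) {J y t : ℝ} {j m : ℕ} (ht : 0 ≤ t)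
    (hj : j ∈ Icc 2 m) (hbj : b (t * (1 - j / m)) ≤ exp (t * (1 - j / m) * y)) :
    K * exp (-t * (j / m) * J) * b (t * (1 - j / m)) ≤
      K * exp (t * max (-J) (y - 2 / m * (J + y))) := by
  obtain ⟨h2j, hjm⟩ := mem_Icc.1 hj
  have hm : (0 : ℝ) < m := by exact_mod_cast (by omega : 0 < m)
  have hexp : -t * (j / m) * J + t * (1 - j / m) * y ≤ t * max (-J) (y - 2 / m * (J + y)) := by
    have hr := neg_mul_add_one_sub_mul_le_max (J := J) (y := y)
      (div_le_div_of_nonneg_right (by exact_mod_cast h2j) hm.le : (2 : ℝ) / m ≤ j / m)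
      ((div_le_one hm).2 (by exact_mod_cast hjm))
    calc -t * (j / m) * J + t * (1 - j / m) * y = t * (-(j / m) * J + (1 - j / m) * y) := by ring
      _ ≤ _ := mul_le_mul_of_nonneg_left hr ht
  calc K * exp (-t * (j / m) * J) * b (t * (1 - j / m))
      ≤ K * exp (-t * (j / m) * J) * exp (t * (1 - j / m) * y) := by gcongr
    _ = K * exp (-t * (j / m) * J + t * (1 - j / m) * y) := by rw [mul_assoc, ← exp_add]
    _ ≤ K * exp (t * max (-J) (y - 2 / m * (J + y))) := by gcongr

theorem bootstrap_rhs_le {K : ℕ → ℝ} (hK : ∀ j, 0 ≤ K j) {A J y ε t : ℝ} {m : ℕ} (ht : 0 ≤ t)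
    (hbj : ∀ j ∈ Icc 2 m, b (t * (1 - j / m)) ≤ exp (t * (1 - j / m) * y)) :
    A * exp (-t * J + t * ε) +
        exp (t * ε) * ∑ j ∈ Icc 2 m, K j * exp (-t * (j / m) * J) * b (t * (1 - j / m)) ≤
      (|A| + ∑ j ∈ Icc 2 m, K j) * exp (t * (ε + max (-J) (y - 2 / m * (J + y)))) := by
  set M := max (-J) (y - 2 / m * (J + y))
  have hA : A * exp (-t * J + t * ε) ≤ |A| * exp (t * (ε + M)) := by
    have : -t * J + t * ε ≤ t * (ε + M) := by nlinarith [le_max_left (-J) (y - 2 / m * (J + y))]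
    calc A * exp (-t * J + t * ε) ≤ |A| * exp (-t * J + t * ε) := by gcongr; exact le_abs_self A
      _ ≤ |A| * exp (t * (ε + M)) := by gcongr
  have hsum : ∑ j ∈ Icc 2 m, K j * exp (-t * (j / m) * J) * b (t * (1 - j / m)) ≤
      ∑ j ∈ Icc 2 m, K j * exp (t * M) :=
    sum_le_sum fun j hj => bootstrap_summand_le (hK j) ht hj (hbj j hj)
  calc _ ≤ |A| * exp (t * (ε + M)) + exp (t * ε) * ∑ j ∈ Icc 2 m, K j * exp (t * M) := by
        gcongr
    _ = _ := by rw [← sum_mul, mul_add, exp_add]; ring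

theorem expGrowthRate_le_of_bootstrap {K : ℕ → ℝ} {A J y ε : ℝ} {m : ℕ} (hm : 0 < m)
    (hb : ∀ᶠ t in atTop, 0 < b t) (hb0 : b 0 ≤ 1) (hK : ∀ j, 0 ≤ K j)
    (hrec : ∀ᶠ t in atTop, b t ≤ A * exp (-t * J + t * ε) +
      exp (t * ε) * ∑ j ∈ Icc 2 m, K j * exp (-t * (j / m) * J) * b (t * (1 - j / m)))
    (hy : expGrowthRate b < y) :
    expGrowthRate b ≤ ((ε + max (-J) (y - 2 / m * (J + y)) : ℝ) : EReal) := by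
  have hargs := eventually_forall_le_mul_one_sub_div (P := fun s => b s ≤ exp (s * y))
    (eventually_le_exp_of_expGrowthRate_lt hb hy) (by simpa using hb0) hm
  refine expGrowthRate_le_of_eventually_le_mul_exp (C := |A| + ∑ j ∈ Icc 2 m, K j) hb ?_
  filter_upwards [hrec, hargs, eventually_ge_atTop 0] with t hrec hargs ht
  exact hrec.trans (bootstrap_rhs_le hK ht fun j hj => hargs j (mem_Icc.1 hj).2)

end Bootstrap

theorem bootstrap_decay_rate_general
    (b : ℝ → ℝ)
    (hb : ∀ t : ℝ, 0 ≤ t → 0 < b t ∧ b t ≤ 1)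
    (J : ℝ) (m : ℕ) (hm : 2 ≤ m) (c : ℝ)
    (K : ℕ → ℝ) (hK : ∀ j, 0 ≤ K j ∧ K j ≤ (m : ℝ) ^ 2 * c)
    (hrec : ∀ ε : ℝ, 0 < ε → ∃ tε : ℝ, ∀ t : ℝ, tε ≤ t →
      b t ≤ (2 + (m : ℝ) ^ 2 * c) * Real.exp (-t * J + t * ε) +
        Real.exp (t * ε) * ∑ j ∈ Finset.Icc 2 m,
          K j * Real.exp (-t * ((j : ℝ) / m) * J) * b (t * (1 - (j : ℝ) / m))) :
    Filter.limsup (fun t : ℝ => (((1 / t) * Real.log (b t) : ℝ) : EReal)) atTop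
      ≤ ((-J : ℝ) : EReal) := by
  have hpos : ∀ᶠ t in atTop, 0 < b t := eventually_atTop.2 ⟨0, fun t ht => (hb t ht).1⟩
  have hle_zero : expGrowthRate b ≤ (0 : ℝ) :=
    expGrowthRate_le_of_eventually_le_mul_exp (C := 1) hpos
      (eventually_atTop.2 ⟨0, fun t ht => by simpa using (hb t ht).2⟩)
  refine le_neg_of_forall_lt_le_max (θ := 2 / m) (by positivity)
    (ne_top_of_le_ne_top (EReal.coe_ne_top 0) hle_zero) fun y hy ε hε => ?_
  exact expGrowthRate_le_of_bootstrap (by omega) hpos (hb 0 le_rfl).2 (fun j => (hK j).1)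
    (eventually_atTop.2 (hrec ε hε)) hy

/-- Bootstrap inequality for decay rates: if `b : ℝ₊ → (0,1]` is nonincreasing and
satisfies, for every `ε > 0` and all large `t`,
`b_t ≤ (2 + m²c) e^{-tJ + tε} + e^{tε} ∑_{j=2}^m K_j e^{-t (j/m) J} b_{t(1-j/m)}`
with `0 ≤ K_j ≤ m²c`, then `limsup_{t→∞} (1/t) log b_t ≤ -J`. -/
theorem bootstrap_decay_rate
    (b : ℝ → ℝ)
    (hb : ∀ t : ℝ, 0 ≤ t → 0 < b t ∧ b t ≤ 1)
    (hmono : ∀ s t : ℝ, 0 ≤ s → s ≤ t → b t ≤ b s)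
    (J : ℝ) (m : ℕ) (hm : 2 ≤ m) (c : ℝ) (hc : 1 ≤ c)
    (K : ℕ → ℝ) (hK : ∀ j, 0 ≤ K j ∧ K j ≤ (m : ℝ) ^ 2 * c)
    (hrec : ∀ ε : ℝ, 0 < ε → ∃ tε : ℝ, ∀ t : ℝ, tε ≤ t →
      b t ≤ (2 + (m : ℝ) ^ 2 * c) * Real.exp (-t * J + t * ε) +
        Real.exp (t * ε) * ∑ j ∈ Finset.Icc 2 m,
          K j * Real.exp (-t * ((j : ℝ) / m) * J) * b (t * (1 - (j : ℝ) / m))) :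
    Filter.limsup (fun t : ℝ => (((1 / t) * Real.log (b t) : ℝ) : EReal)) atTop
      ≤ ((-J : ℝ) : EReal) :=
  bootstrap_decay_rate_general b hb J m hm c K hK hrec
end
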